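/- A vertex tree-shift X_{A_0,A_1} is uniformly strongly irreducible if and only if it is uniformly block gluing. -/

import Mathlib

/-- Words over the binary alphabet Σ = {0,1}, encoded as lists of booleans
(0 ↦ `false`, 1 ↦ `true`).  Concatenation of words is list append. -/
abbrev Word : Type := List Bool

/-- An infinite tree over the alphabet `A`: a labeling of Σ* by `A`. -/
abbrev ITree (A : Type) : Type := Word → A

/-- The shift map σ_w, given by (σ_w t)(x) = t(wx). -/
def shiftW {A : Type} (w : Word) (t : ITree A) : ITree A := fun x => t (w ++ x)

/-- A pattern: a support (set of nodes) together with labels.  Only the values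
of `val` on `supp` are relevant. -/
structure Pattern (A : Type) where
  supp : Set Word
  val : Word → A

/-- The support of a pattern is prefix-closed. -/
def Pattern.PrefixClosed {A : Type} (u : Pattern A) : Prop :=
  ∀ x ∈ u.supp, ∀ y : Word, y <+: x → y ∈ u.supp

/-- A leaf of a pattern: a node of the support none of whose children lies in
the support. -/
def Pattern.IsLeaf {A : Type} (u : Pattern A) (w : Word) : Prop :=
  w ∈ u.supp ∧ ∀ i : Bool, w ++ [i] ∉ u.supp

/-- The pattern `u` is accepted by the tree `t` (rooted at some node `x`). -/
def AcceptedBy {A : Type} (u : Pattern A) (t : ITree A) : Prop :=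
  ∃ x : Word, ∀ y ∈ u.supp, u.val y = t (x ++ y)

/-- The pattern `u` is accepted by some tree of `X`. -/
def AcceptedIn {A : Type} (X : Set (ITree A)) (u : Pattern A) : Prop :=
  ∃ t ∈ X, AcceptedBy u t

/-- The set of trees avoiding every pattern of the forbidden set `F`. -/
def treeShiftOf {A : Type} (F : Set (Pattern A)) : Set (ITree A) :=
  { t | ∀ u ∈ F, ¬ AcceptedBy u t }

/-- A tree-shift: a set of trees of the form `X_F` for a set `F` of finite
(prefix-closed) patterns. -/
def IsTreeShift {A : Type} (X : Set (ITree A)) : Prop :=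
  ∃ F : Set (Pattern A), (∀ u ∈ F, u.supp.Finite ∧ u.PrefixClosed) ∧ X = treeShiftOf F

/-- A complete prefix code: a finite set of nonempty words, none a prefix of
another, such that every word of length ≥ max{|p| : p ∈ P} has a prefix in P. -/
def IsCPC (P : Finset Word) : Prop :=
  ([] : Word) ∉ P ∧
  (∀ p ∈ P, ∀ q ∈ P, p <+: q → p = q) ∧
  (∀ x : Word, P.sup List.length ≤ x.length → ∃ p ∈ P, p <+: x)

/-- Σ^k, the set of all words of length k, as a finite set. -/
def fullCode (k : ℕ) : Finset Word :=
  Finset.image (fun f : Fin k → Bool => List.ofFn f) Finset.univ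

/-- Σ_{n-1}: the set of all words of length < n (i.e. length ≤ n-1). -/
def sigmaLt (n : ℕ) : Set Word := { x : Word | x.length < n }

/-- An n-block of `X`: a pattern with support Σ_{n-1} accepted by some tree of `X`. -/
def IsNBlock {A : Type} (X : Set (ITree A)) (n : ℕ) (u : Pattern A) : Prop :=
  u.supp = sigmaLt n ∧ AcceptedIn X u

/-- A (finite, prefix-closed) pattern accepted by some tree of `X`. -/
def GoodPattern {A : Type} (X : Set (ITree A)) (u : Pattern A) : Prop :=
  u.supp.Finite ∧ u.PrefixClosed ∧ AcceptedIn X u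

/-- Patterns `u`, `v` are connected through `P` in `X`: there is `t ∈ X`
agreeing with `u` on its support and with a copy of `v` rooted at `wx` for
every leaf `w` of `u` and every `x ∈ P`. -/
def ConnectedThrough {A : Type} (X : Set (ITree A)) (P : Finset Word) (u v : Pattern A) : Prop :=
  ∃ t ∈ X, (∀ y ∈ u.supp, t y = u.val y) ∧
    ∀ w : Word, u.IsLeaf w → ∀ x ∈ P, ∀ y ∈ v.supp, t (w ++ x ++ y) = v.val y

/-- Block gluing: a single CPC connects any two n-blocks, for every n. -/
def BlockGluing {A : Type} (X : Set (ITree A)) : Prop :=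
  ∃ P : Finset Word, IsCPC P ∧ ∀ n : ℕ, ∀ u v : Pattern A,
    IsNBlock X n u → IsNBlock X n v → ConnectedThrough X P u v

/-- Uniformly block gluing: the CPC can be taken of the form Σ^k. -/
def UniformlyBlockGluing {A : Type} (X : Set (ITree A)) : Prop :=
  ∃ k : ℕ, IsCPC (fullCode k) ∧ ∀ n : ℕ, ∀ u v : Pattern A,
    IsNBlock X n u → IsNBlock X n v → ConnectedThrough X (fullCode k) u v

/-- Strongly irreducible: a single CPC connects any two accepted patterns. -/
def StronglyIrreducible {A : Type} (X : Set (ITree A)) : Prop :=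
  ∃ P : Finset Word, IsCPC P ∧ ∀ u v : Pattern A,
    GoodPattern X u → GoodPattern X v → ConnectedThrough X P u v

/-- Uniformly strongly irreducible: the CPC can be taken of the form Σ^k. -/
def UniformlyStronglyIrreducible {A : Type} (X : Set (ITree A)) : Prop :=
  ∃ k : ℕ, IsCPC (fullCode k) ∧ ∀ u v : Pattern A,
    GoodPattern X u → GoodPattern X v → ConnectedThrough X (fullCode k) u v

/-- A leaf of a set of nodes. -/
def SetLeaf (L : Set Word) (w : Word) : Prop := w ∈ L ∧ ∀ i : Bool, w ++ [i] ∉ L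

/-- Topological mixing. -/
def TopologicallyMixing {A : Type} (X : Set (ITree A)) : Prop :=
  ∀ L1 L2 : Set Word, L1.Finite → L2.Finite →
    (∀ x ∈ L1, ∀ y : Word, y <+: x → y ∈ L1) →
    (∀ x ∈ L2, ∀ y : Word, y <+: x → y ∈ L2) →
    ∃ P : Finset Word, IsCPC P ∧ ∀ t1 ∈ X, ∀ t2 ∈ X, ∃ t ∈ X,
      (∀ y ∈ L1, t y = t1 y) ∧
      ∀ w : Word, SetLeaf L1 w → ∀ x ∈ P, ∀ y ∈ L2, t (w ++ x ++ y) = t2 y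

/-- The vertex tree-shift of the pair of 0-1 matrices `A0`, `A1`. -/
def vertexShift {A : Type} (A0 A1 : A → A → Bool) : Set (ITree A) :=
  { t | ∀ x : Word,
      A0 (t x) (t (x ++ [false])) = true ∧ A1 (t x) (t (x ++ [true])) = true }

/-- The n-blocks of `X`, realized as labelings of Σ_{n-1}; used for counting
`|B_n(X)|`. -/
def blockFuns {A : Type} (X : Set (ITree A)) (n : ℕ) :
    Set ({ x : Word // x.length < n } → A) :=
  { f | ∃ t ∈ X, ∃ r : Word, ∀ y : { x : Word // x.length < n }, f y = t (r ++ y.val) }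


/-!
Uniform block gluing at level `1` already puts, below any letter occurring in the shift, a
copy of any tree of the shift at every node of depth `k`. Because a vertex shift only
constrains parent–child pairs, trees of the shift can be grafted onto each other at any
prefix antichain of nodes whose labels match; grafting such trees at the leaves of a pattern
`u` (and, inside them, a copy of `v` at depth `k`) connects `u` to `v` through `Σ^k`.
-/

section VertexShift

variable {A : Type} {A0 A1 : A → A → Bool}

lemma mem_fullCode {x : Word} {k : ℕ} : x ∈ fullCode k ↔ x.length = k := by
  constructor
  · rintro hx
    obtain ⟨f, -, rfl⟩ := Finset.mem_image.1 hx
    exact List.length_ofFn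
  · rintro rfl
    exact Finset.mem_image.2 ⟨x.get, Finset.mem_univ _, List.ofFn_get x⟩

lemma mem_vertexShift_iff {t : ITree A} :
    t ∈ vertexShift A0 A1 ↔
      ∀ z : Word, ∀ i : Bool, (bif i then A1 else A0) (t z) (t (z ++ [i])) = true :=
  ⟨fun h z i => by cases i <;> simp [h z], fun h z => ⟨h z false, h z true⟩⟩

lemma shiftW_mem_vertexShift {t : ITree A} (ht : t ∈ vertexShift A0 A1) (w : Word) :
    shiftW w t ∈ vertexShift A0 A1 := by
  intro x
  simpa [shiftW, List.append_assoc] using ht (w ++ x)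

def PrefixAntichain (L : Set Word) : Prop :=
  ∀ w ∈ L, ∀ w' ∈ L, w <+: w' → w = w'

/-- Below each node `w ∈ L` the tree `t` is replaced by `S w`; the node chosen is unique when
`L` is a prefix antichain. -/
noncomputable def graft (L : Set Word) (t : ITree A) (S : Word → ITree A) : ITree A :=
  fun z => open Classical in
    if h : ∃ w ∈ L, w <+: z then S h.choose (z.drop h.choose.length) else t z

lemma graft_append {L : Set Word} (hL : PrefixAntichain L) (t : ITree A)
    (S : Word → ITree A) {w : Word} (hw : w ∈ L) (y : Word) :
    graft L t S (w ++ y) = S w y := by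
  have hex : ∃ w' ∈ L, w' <+: w ++ y := ⟨w, hw, List.prefix_append w y⟩
  obtain ⟨hmem, hpre⟩ := hex.choose_spec
  have hchoose : hex.choose = w :=
    (List.prefix_or_prefix_of_prefix hpre (List.prefix_append w y)).elim
      (hL _ hmem _ hw) (fun h => (hL _ hw _ hmem h).symm)
  simp only [graft, dif_pos hex, hchoose, List.drop_left]

lemma graft_eq_of_forall_prefix_eq {L : Set Word} (hL : PrefixAntichain L) {t : ITree A}
    {S : Word → ITree A} (hroot : ∀ w ∈ L, S w [] = t w) {z : Word}
    (hz : ∀ w ∈ L, w <+: z → w = z) : graft L t S z = t z := by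
  by_cases h : ∃ w ∈ L, w <+: z
  · obtain ⟨w, hw, hwz⟩ := h
    obtain rfl := hz w hw hwz
    simpa using (graft_append hL t S hw []).trans (hroot w hw)
  · simp only [graft, dif_neg h]

lemma graft_mem_vertexShift {L : Set Word} (hL : PrefixAntichain L) {t : ITree A}
    (ht : t ∈ vertexShift A0 A1) {S : Word → ITree A}
    (hS : ∀ w ∈ L, S w ∈ vertexShift A0 A1)
    (hroot : ∀ w ∈ L, S w [] = t w) : graft L t S ∈ vertexShift A0 A1 := by
  rw [mem_vertexShift_iff]
  intro z i
  by_cases hz : ∃ w ∈ L, w <+: z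
  · obtain ⟨w, hw, y, rfl⟩ := hz
    rw [List.append_assoc, graft_append hL t S hw, graft_append hL t S hw]
    exact mem_vertexShift_iff.1 (hS w hw) y i
  · simp only [not_exists, not_and] at hz
    have hparent : graft L t S z = t z :=
      graft_eq_of_forall_prefix_eq hL hroot fun w hw hwz => absurd hwz (hz w hw)
    -- a node of `L` above the child but not above `z` is the child itself
    have hchild : graft L t S (z ++ [i]) = t (z ++ [i]) :=
      graft_eq_of_forall_prefix_eq hL hroot fun w hw hwz =>
        (List.prefix_concat_iff.1 hwz).resolve_right (hz w hw)
    rw [hparent, hchild]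
    exact mem_vertexShift_iff.1 ht z i

lemma prefixAntichain_length_eq (k : ℕ) : PrefixAntichain {x : Word | x.length = k} :=
  fun _ hw _ hw' h => h.eq_of_length (hw.trans hw'.symm)

lemma Pattern.PrefixClosed.eq_of_isLeaf_of_prefix {u : Pattern A} (hu : u.PrefixClosed)
    {w w' : Word} (hw : u.IsLeaf w) (hw' : w' ∈ u.supp) (h : w <+: w') : w = w' := by
  obtain ⟨_ | ⟨i, r⟩, rfl⟩ := h
  · simp
  · exact absurd (hu _ hw' _ ⟨r, by simp⟩) (hw.2 i)

lemma Pattern.PrefixClosed.prefixAntichain_isLeaf {u : Pattern A} (hu : u.PrefixClosed) :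
    PrefixAntichain {w | u.IsLeaf w} :=
  fun _ hw _ hw' => hu.eq_of_isLeaf_of_prefix hw hw'.1

lemma isNBlock_one_root {X : Set (ITree A)} {t : ITree A} (ht : t ∈ X) :
    IsNBlock X 1 ⟨sigmaLt 1, fun _ => t []⟩ := by
  refine ⟨rfl, t, ht, [], fun y hy => ?_⟩
  obtain rfl : y = [] := List.length_eq_zero_iff.1 (Nat.lt_one_iff.1 hy)
  rfl

lemma IsNBlock.goodPattern {X : Set (ITree A)} {n : ℕ} {u : Pattern A} (hu : IsNBlock X n u) :
    GoodPattern X u := by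
  obtain ⟨hsupp, hacc⟩ := hu
  refine ⟨hsupp ▸ List.finite_length_lt Bool n, fun x hx y hy => ?_, hacc⟩
  rw [hsupp] at hx ⊢
  exact lt_of_le_of_lt hy.length_le hx

lemma exists_mem_vertexShift_root_eq_and_copies {k : ℕ}
    (hglue : ∀ u v : Pattern A, IsNBlock (vertexShift A0 A1) 1 u →
      IsNBlock (vertexShift A0 A1) 1 v → ConnectedThrough (vertexShift A0 A1) (fullCode k) u v)
    {ta tv : ITree A} (hta : ta ∈ vertexShift A0 A1) (htv : tv ∈ vertexShift A0 A1) :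
    ∃ s ∈ vertexShift A0 A1, s [] = ta [] ∧
      ∀ x : Word, x.length = k → ∀ y : Word, s (x ++ y) = tv y := by
  obtain ⟨s, hs, hsroot, hscopy⟩ := hglue _ _ (isNBlock_one_root hta) (isNBlock_one_root htv)
  have hleaf : Pattern.IsLeaf ⟨sigmaLt 1, fun _ => ta []⟩ [] :=
    ⟨by simp [sigmaLt], by simp [sigmaLt]⟩
  have hlevel : ∀ x ∈ {x : Word | x.length = k}, tv [] = s x := fun x hx => by
    simpa using (hscopy [] hleaf x (mem_fullCode.2 hx) [] (by simp [sigmaLt])).symm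
  have hL := prefixAntichain_length_eq k
  refine ⟨graft _ s fun _ => tv, graft_mem_vertexShift hL hs (fun _ _ => htv) hlevel, ?_,
    fun x hx y => graft_append hL _ _ hx y⟩
  rw [graft_eq_of_forall_prefix_eq hL hlevel fun _ _ h => List.prefix_nil.1 h]
  exact hsroot [] (by simp [sigmaLt])

lemma UniformlyStronglyIrreducible.uniformlyBlockGluing {X : Set (ITree A)}
    (h : UniformlyStronglyIrreducible X) : UniformlyBlockGluing X := by
  obtain ⟨k, hcpc, hconn⟩ := h
  exact ⟨k, hcpc, fun _ u v hu hv => hconn u v hu.goodPattern hv.goodPattern⟩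

lemma UniformlyBlockGluing.uniformlyStronglyIrreducible_vertexShift
    (h : UniformlyBlockGluing (vertexShift A0 A1)) :
    UniformlyStronglyIrreducible (vertexShift A0 A1) := by
  obtain ⟨k, hcpc, hglue⟩ := h
  refine ⟨k, hcpc, fun u v ⟨_, hupc, tu, htu, xu, hu⟩ ⟨_, _, tv, htv, xv, hv⟩ => ?_⟩
  have hTu := shiftW_mem_vertexShift htu xu
  have hS : ∀ w : Word, ∃ s ∈ vertexShift A0 A1, s [] = shiftW xu tu w ∧
      ∀ x : Word, x.length = k → ∀ y : Word, s (x ++ y) = shiftW xv tv y := fun w => by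
    simpa [shiftW] using exists_mem_vertexShift_root_eq_and_copies (hglue 1)
      (shiftW_mem_vertexShift hTu w) (shiftW_mem_vertexShift htv xv)
  choose S hSmem hSroot hScopy using hS
  have hL := hupc.prefixAntichain_isLeaf
  refine ⟨graft _ (shiftW xu tu) S, graft_mem_vertexShift hL hTu (fun w _ => hSmem w)
    (fun w _ => hSroot w), fun y hy => ?_, fun w hw x hx y hy => ?_⟩
  · rw [graft_eq_of_forall_prefix_eq hL (fun w _ => hSroot w)
      fun w hw hwy => hupc.eq_of_isLeaf_of_prefix hw hy hwy]
    exact (hu y hy).symm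
  · rw [List.append_assoc, graft_append hL _ S hw, hScopy w x (mem_fullCode.1 hx)]
    exact (hv y hy).symm

end VertexShift

theorem stmt7_general {A : Type} (A0 A1 : A → A → Bool) :
    UniformlyStronglyIrreducible (vertexShift A0 A1) ↔
      UniformlyBlockGluing (vertexShift A0 A1) :=
  ⟨UniformlyStronglyIrreducible.uniformlyBlockGluing,
    UniformlyBlockGluing.uniformlyStronglyIrreducible_vertexShift⟩

/-- a vertex tree-shift is uniformly strongly irreducible iff it
is uniformly block gluing. -/
theorem stmt7 {A : Type} [Fintype A] (A0 A1 : A → A → Bool) :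
    UniformlyStronglyIrreducible (vertexShift A0 A1) ↔
      UniformlyBlockGluing (vertexShift A0 A1) :=
  stmt7_general A0 A1
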